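/- arXiv:1601.07417 — 4 statements merged into one kernel-verified Lean document; each statement's English description precedes it below -/
import Mathlib

section
/- The correlation ratio satisfies η_Z(Y)^2 = sup over Borel measurable g with 0 < var(g(Z)) < ∞ of ρ^2(Y, g(Z)), where ρ is the Pearson correlation coefficient. -/
/-! For `g(Z) ∈ L²`, `Cov(Y, g(Z)) = Cov(E[Y|Z], g(Z))` since `Y - E[Y|Z]` is orthogonal to the
`σ(Z)`-measurable functions, so Cauchy–Schwarz gives `ρ²(Y, g(Z)) ≤ var(E[Y|Z]) / var(Y)`.
By Doob–Dynkin `E[Y|Z] = g(Z)` for a Borel `g`, which attains the bound unless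
`var(E[Y|Z]) = 0`, in which case both sides vanish. -/

open MeasureTheory ProbabilityTheory

noncomputable section

variable {Ω : Type*} [MeasurableSpace Ω]

/-- Minimum mean-squared error of estimating `U` from `V`: `E[(U - E[U|σ(V)])²]`. -/
def mmse (μ : Measure Ω) {β : Type*} [MeasurableSpace β] (U : Ω → ℝ) (V : Ω → β) : ℝ :=
  ∫ ω, (U ω - (μ[U | MeasurableSpace.comap V inferInstance]) ω) ^ 2 ∂μ

/-- The squared Hirschfeld–Gebelein–Rényi maximal correlation of `A` and `B`:
the supremum of squared Pearson correlations `ρ²(f(A), g(B))` over all measurable `f, g`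
with zero mean and finite nonzero variance. -/
def rho2max (μ : Measure Ω) {α β : Type*} [MeasurableSpace α] [MeasurableSpace β]
    (A : Ω → α) (B : Ω → β) : ℝ :=
  sSup {r : ℝ | ∃ f : α → ℝ, ∃ g : β → ℝ, Measurable f ∧ Measurable g ∧
    (∫ ω, f (A ω) ∂μ) = 0 ∧ (∫ ω, g (B ω) ∂μ) = 0 ∧
    0 < variance (fun ω => f (A ω)) μ ∧ MemLp (fun ω => f (A ω)) 2 μ ∧
    0 < variance (fun ω => g (B ω)) μ ∧ MemLp (fun ω => g (B ω)) 2 μ ∧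
    r = (∫ ω, f (A ω) * g (B ω) ∂μ) ^ 2 /
        (variance (fun ω => f (A ω)) μ * variance (fun ω => g (B ω)) μ)}

end

namespace ProbabilityTheory

variable {Ω : Type*} {m mΩ : MeasurableSpace Ω} {μ : Measure Ω} {X Y W : Ω → ℝ}

lemma sq_covariance_le_variance_mul_variance [IsFiniteMeasure μ] (hX : MemLp X 2 μ)
    (hY : MemLp Y 2 μ) : cov[X, Y; μ] ^ 2 ≤ Var[X; μ] * Var[Y; μ] := by
  have hquad : ∀ t : ℝ, 0 ≤ Var[X; μ] * (t * t) + 2 * cov[X, Y; μ] * t + Var[Y; μ] := by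
    intro t
    have h := variance_nonneg ((fun ω => t * X ω) + Y) μ
    rw [variance_add (hX.const_mul t) hY, variance_const_mul, covariance_const_mul_left] at h
    linarith
  have := discrim_le_zero hquad
  rw [discrim] at this
  linarith

lemma integral_mul_condExp_of_stronglyMeasurable [IsFiniteMeasure μ] (hm : m ≤ mΩ)
    (hW : StronglyMeasurable[m] W) (hW2 : MemLp W 2 μ) (hY : MemLp Y 2 μ) :
    μ[W * μ[Y | m]] = μ[W * Y] := by
  rw [← integral_condExp hm (f := W * Y)]
  exact integral_congr_ae (condExp_mul_of_stronglyMeasurable_left hW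
    (hW2.integrable_mul hY) (hY.integrable one_le_two)).symm

lemma covariance_condExp_left [IsProbabilityMeasure μ] (hm : m ≤ mΩ)
    (hW : StronglyMeasurable[m] W) (hW2 : MemLp W 2 μ) (hY : MemLp Y 2 μ) :
    cov[μ[Y | m], W; μ] = cov[Y, W; μ] := by
  rw [covariance_eq_sub (hY.condExp one_le_two) hW2, covariance_eq_sub hY hW2,
    mul_comm (μ[Y | m]), integral_mul_condExp_of_stronglyMeasurable hm hW hW2 hY,
    integral_condExp hm, mul_comm W]

lemma sq_covariance_div_le_variance_condExp_div [IsProbabilityMeasure μ] (hm : m ≤ mΩ)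
    (hW : StronglyMeasurable[m] W) (hW2 : MemLp W 2 μ) (hY : MemLp Y 2 μ) :
    cov[Y, W; μ] ^ 2 / (Var[Y; μ] * Var[W; μ]) ≤ Var[μ[Y | m]; μ] / Var[Y; μ] := by
  rcases (variance_nonneg W μ).eq_or_lt with hW0 | hWpos
  · rw [← hW0, mul_zero, div_zero]
    exact div_nonneg (variance_nonneg _ _) (variance_nonneg _ _)
  calc cov[Y, W; μ] ^ 2 / (Var[Y; μ] * Var[W; μ])
      ≤ Var[μ[Y | m]; μ] * Var[W; μ] / (Var[Y; μ] * Var[W; μ]) := by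
        rw [← covariance_condExp_left hm hW hW2 hY]
        exact div_le_div_of_nonneg_right
          (sq_covariance_le_variance_mul_variance (hY.condExp one_le_two) hW2)
          (mul_nonneg (variance_nonneg _ _) (variance_nonneg _ _))
    _ = Var[μ[Y | m]; μ] / Var[Y; μ] := mul_div_mul_right _ _ hWpos.ne'

lemma sq_covariance_condExp_div [IsProbabilityMeasure μ] (hm : m ≤ mΩ) (hY : MemLp Y 2 μ) :
    cov[Y, μ[Y | m]; μ] ^ 2 / (Var[Y; μ] * Var[μ[Y | m]; μ]) = Var[μ[Y | m]; μ] / Var[Y; μ] := by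
  have hE := hY.condExp (m := m) one_le_two
  rw [← covariance_condExp_left hm stronglyMeasurable_condExp hE hY,
    covariance_self hE.aemeasurable]
  rcases eq_or_ne Var[μ[Y | m]; μ] 0 with h0 | h0
  · simp [h0]
  · field_simp

end ProbabilityTheory

theorem stmt2_general {Ω : Type*} [MeasurableSpace Ω] (μ : Measure Ω) [IsProbabilityMeasure μ]
    (Y Z : Ω → ℝ) (hZ : Measurable Z)
    (hY2 : MemLp Y 2 μ) :
    variance (μ[Y | MeasurableSpace.comap Z inferInstance]) μ / variance Y μ
      = sSup {r : ℝ | ∃ g : ℝ → ℝ, Measurable g ∧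
          0 < variance (fun ω => g (Z ω)) μ ∧ MemLp (fun ω => g (Z ω)) 2 μ ∧
          r = (∫ ω, (Y ω - ∫ ω', Y ω' ∂μ) * (g (Z ω) - ∫ ω', g (Z ω') ∂μ) ∂μ) ^ 2 /
              (variance Y μ * variance (fun ω => g (Z ω)) μ)} := by
  have hm := hZ.comap_le
  have hbound : ∀ g : ℝ → ℝ, Measurable g → MemLp (fun ω => g (Z ω)) 2 μ →
      cov[Y, fun ω => g (Z ω); μ] ^ 2 / (Var[Y; μ] * Var[fun ω => g (Z ω); μ])
        ≤ Var[μ[Y | MeasurableSpace.comap Z inferInstance]; μ] / Var[Y; μ] := fun g hg hW2 =>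
    sq_covariance_div_le_variance_condExp_div hm
      (hg.comp (comap_measurable Z)).stronglyMeasurable hW2 hY2
  refine le_antisymm ?_ (Real.sSup_le (fun r ⟨g, hg, _, hW2, hr⟩ => hr ▸ hbound g hg hW2)
    (div_nonneg (variance_nonneg _ _) (variance_nonneg _ _)))
  rcases (variance_nonneg (μ[Y | MeasurableSpace.comap Z inferInstance]) μ).eq_or_lt with h0 | hpos
  · rw [← h0, zero_div]
    exact Real.sSup_nonneg fun r ⟨g, _, _, _, hr⟩ =>
      hr ▸ div_nonneg (sq_nonneg _) (mul_nonneg (variance_nonneg _ _) (variance_nonneg _ _))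
  · obtain ⟨g, hg, hgE⟩ : ∃ g : ℝ → ℝ, StronglyMeasurable g ∧
        μ[Y | MeasurableSpace.comap Z inferInstance] = g ∘ Z :=
      stronglyMeasurable_condExp.exists_eq_measurable_comp
    replace hgE : (fun ω => g (Z ω)) = μ[Y | MeasurableSpace.comap Z inferInstance] := hgE.symm
    refine le_csSup ⟨_, fun r ⟨g, hg, _, hW2, hr⟩ => hr ▸ hbound g hg hW2⟩
      ⟨g, hg.measurable, hgE ▸ hpos, hgE ▸ hY2.condExp one_le_two, ?_⟩
    change _ = cov[Y, fun ω => g (Z ω); μ] ^ 2 / _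
    rw [hgE, sq_covariance_condExp_div hm hY2]

/-- The correlation ratio `η_Z(Y)² = var(E[Y|Z])/var(Y)` equals the supremum of squared
Pearson correlations `ρ²(Y, g(Z))` over measurable `g` with finite nonzero variance. -/
theorem stmt2 {Ω : Type*} [MeasurableSpace Ω] (μ : Measure Ω) [IsProbabilityMeasure μ]
    (Y Z : Ω → ℝ) (hY : Measurable Y) (hZ : Measurable Z)
    (hY2 : MemLp Y 2 μ) (hv : 0 < variance Y μ) :
    variance (μ[Y | MeasurableSpace.comap Z inferInstance]) μ / variance Y μ
      = sSup {r : ℝ | ∃ g : ℝ → ℝ, Measurable g ∧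
          0 < variance (fun ω => g (Z ω)) μ ∧ MemLp (fun ω => g (Z ω)) 2 μ ∧
          r = (∫ ω, (Y ω - ∫ ω', Y ω' ∂μ) * (g (Z ω) - ∫ ω', g (Z ω') ∂μ) ∂μ) ^ 2 /
              (variance Y μ * variance (fun ω => g (Z ω)) μ)} :=
  stmt2_general μ Y Z hZ hY2
end

section
/- For the erasure channel Z_δ of a random variable Y with erasure probability δ, the squared maximal correlation satisfies ρ_m^2(Y; Z_δ) = 1 - δ, and for any X with X–Y–Z_δ a Markov chain, ρ_m^2(X; Z_δ) = (1-δ) ρ_m^2(X;Y). -/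
/-!
Conditioning on the erasure event, which is independent of `(X, Y)` and has probability `δ`,
gives for all `f`, `g`
  `cov (f X, g Z_δ) = (1 - δ) cov (f X, g Y)`,
  `Var (g Z_δ) = (1 - δ) Var (g Y) + δ (1 - δ) (E g(Y) - g(e))²`.
Hence every squared correlation with `Z_δ` is at most `1 - δ` times one with `Y`, and the factor
is attained by giving `g` the value `E g(Y)` at the erasure symbol. The identity for
`ρ_m²(Y; Z_δ)` is the case `X = Y`, as `ρ_m²(Y; Y) = 1` for non-constant `Y`.
-/

open MeasureTheory ProbabilityTheory

open Set
open scoped ENNReal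

section MaximalCorrelation

variable {Ω α β : Type*} [MeasurableSpace Ω] [MeasurableSpace α] [MeasurableSpace β]
  {μ : Measure Ω} {A : Ω → α} {B : Ω → β}

theorem sq_integral_mul_le {F G : Ω → ℝ} (hF : MemLp F 2 μ) (hG : MemLp G 2 μ) :
    (∫ ω, F ω * G ω ∂μ) ^ 2 ≤ (∫ ω, F ω ^ 2 ∂μ) * ∫ ω, G ω ^ 2 ∂μ := by
  have h := real_inner_mul_inner_self_le (hF.toLp F) (hG.toLp G)
  have hinner : ∀ {F' G' : Ω → ℝ} (hF' : MemLp F' 2 μ) (hG' : MemLp G' 2 μ),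
      ∫ ω, hG'.toLp G' ω * hF'.toLp F' ω ∂μ = ∫ ω, F' ω * G' ω ∂μ := fun hF' hG' =>
    integral_congr_ae <| (hG'.coeFn_toLp.mul hF'.coeFn_toLp).trans
      (.of_forall fun ω => mul_comm _ _)
  simp only [L2.inner_def, RCLike.inner_apply, conj_trivial, hinner] at h
  simpa [sq] using h

theorem covariance_eq_integral_mul {F G : Ω → ℝ} (hF : ∫ ω, F ω ∂μ = 0)
    (hG : ∫ ω, G ω ∂μ = 0) : cov[F, G; μ] = ∫ ω, F ω * G ω ∂μ := by
  simp [covariance, hF, hG]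

theorem memLp_comp_of_finite_range [IsFiniteMeasure μ] {V : Ω → α} (hV : Measurable V)
    (hfin : (range V).Finite) {g : α → ℝ} (hg : Measurable g) (p : ℝ≥0∞) :
    MemLp (fun ω => g (V ω)) p μ := by
  obtain ⟨C, hC⟩ := (hfin.image fun a => ‖g a‖).bddAbove
  exact MemLp.of_bound (hg.comp hV).aestronglyMeasurable C
    (.of_forall fun ω => hC ⟨V ω, mem_range_self ω, rfl⟩)

theorem rho2max_nonneg : 0 ≤ rho2max μ A B :=
  Real.sSup_nonneg <| by
    rintro r ⟨f, g, -, -, -, -, -, -, -, -, rfl⟩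
    exact div_nonneg (sq_nonneg _) (mul_nonneg (variance_nonneg _ _) (variance_nonneg _ _))

theorem rho2max_le {c : ℝ} (hc : 0 ≤ c)
    (h : ∀ (f : α → ℝ) (g : β → ℝ), Measurable f → Measurable g →
      MemLp (fun ω => f (A ω)) 2 μ → MemLp (fun ω => g (B ω)) 2 μ →
      cov[fun ω => f (A ω), fun ω => g (B ω); μ] ^ 2 ≤
        c * Var[fun ω => f (A ω); μ] * Var[fun ω => g (B ω); μ]) :
    rho2max μ A B ≤ c := by
  refine Real.sSup_le ?_ hc
  rintro r ⟨f, g, hf, hg, hf0, hg0, hvf, hfA, hvg, hgB, rfl⟩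
  rw [div_le_iff₀ (by positivity), ← mul_assoc, ← covariance_eq_integral_mul hf0 hg0]
  exact h f g hf hg hfA hgB

variable [IsProbabilityMeasure μ]

theorem covariance_sq_le_variance_mul {F G : Ω → ℝ} (hF : MemLp F 2 μ) (hG : MemLp G 2 μ) :
    cov[F, G; μ] ^ 2 ≤ Var[F; μ] * Var[G; μ] := by
  rw [covariance, variance_eq_integral hF.aemeasurable, variance_eq_integral hG.aemeasurable]
  exact sq_integral_mul_le (hF.sub (memLp_const _)) (hG.sub (memLp_const _))

/-- With `rho2max_le`: `rho2max μ A B` is the least `c ≥ 0` with `cov² ≤ c * Var * Var` for all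
square-integrable `f (A)`, `g (B)`, centred or not. -/
theorem covariance_sq_le_rho2max_mul {f : α → ℝ} {g : β → ℝ} (hf : Measurable f)
    (hg : Measurable g) (hfA : MemLp (fun ω => f (A ω)) 2 μ)
    (hgB : MemLp (fun ω => g (B ω)) 2 μ) :
    cov[fun ω => f (A ω), fun ω => g (B ω); μ] ^ 2 ≤
      rho2max μ A B * Var[fun ω => f (A ω); μ] * Var[fun ω => g (B ω); μ] := by
  have hCS := covariance_sq_le_variance_mul hfA hgB
  rcases (variance_nonneg (fun ω => f (A ω)) μ).eq_or_lt with hvf | hvf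
  · simpa [← hvf] using hCS
  rcases (variance_nonneg (fun ω => g (B ω)) μ).eq_or_lt with hvg | hvg
  · simpa [← hvg] using hCS
  set m := ∫ ω, f (A ω) ∂μ
  set n := ∫ ω, g (B ω) ∂μ
  have hcentred : ∀ {F : Ω → ℝ}, MemLp F 2 μ → ∫ ω, (F ω - ∫ ω, F ω ∂μ) ∂μ = 0 := fun hF => by
    simp [integral_sub (hF.integrable one_le_two) (integrable_const _)]
  rw [mul_assoc, ← div_le_iff₀ (by positivity)]
  refine le_csSup ⟨1, ?_⟩ ⟨fun a => f a - m, fun b => g b - n, hf.sub_const m, hg.sub_const n,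
    hcentred hfA, hcentred hgB, ?_, hfA.sub (memLp_const m), ?_, hgB.sub (memLp_const n), ?_⟩
  · rintro r ⟨f', g', -, -, hf0, hg0, hvf', hfA', hvg', hgB', rfl⟩
    rw [div_le_one (by positivity), ← covariance_eq_integral_mul hf0 hg0]
    exact covariance_sq_le_variance_mul hfA' hgB'
  · rwa [variance_sub_const hfA.aestronglyMeasurable]
  · rwa [variance_sub_const hgB.aestronglyMeasurable]
  · rw [variance_sub_const hfA.aestronglyMeasurable, variance_sub_const hgB.aestronglyMeasurable]
    rfl

theorem rho2max_self {Y : Ω → ℝ} (hY : MemLp Y 2 μ) (hv : 0 < Var[Y; μ]) :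
    rho2max μ Y Y = 1 := by
  refine le_antisymm (rho2max_le zero_le_one fun f g _ _ hfY hgY => ?_) ?_
  · simpa using covariance_sq_le_variance_mul hfY hgY
  have h := covariance_sq_le_rho2max_mul (f := id) (g := id) measurable_id measurable_id hY hY
  simp only [id_eq, covariance_self hY.aemeasurable] at h
  exact le_of_mul_le_mul_right (by linarith) (mul_pos hv hv)

end MaximalCorrelation

section Erasure

variable {Ω β : Type*}

def erasure (E : Ω → Bool) (e : β) (Y : Ω → β) : Ω → β := fun ω => if E ω then e else Y ω

theorem finite_range_erasure {Y : Ω → β} (hY : (range Y).Finite) (E : Ω → Bool) (e : β) :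
    (range (erasure E e Y)).Finite :=
  (hY.insert e).subset <| by
    rintro _ ⟨ω, rfl⟩
    by_cases h : E ω <;> simp [erasure, h]

variable {α : Type*} [MeasurableSpace Ω] [MeasurableSpace α] [MeasurableSpace β]
  {μ : Measure Ω} [IsProbabilityMeasure μ]
  {X : Ω → α} {Y : Ω → β} {E : Ω → Bool} {e : β} {δ : ℝ}

theorem measurable_erasure (hE : Measurable E) (hY : Measurable Y) (e : β) :
    Measurable (erasure E e Y) :=
  Measurable.ite (hE (measurableSet_singleton true)) measurable_const hY

theorem integral_comp_erasure (hX : Measurable X) (hY : Measurable Y) (hE : Measurable E)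
    (hind : IndepFun (fun ω => (X ω, Y ω)) E μ) (hδ : μ.real (E ⁻¹' {true}) = δ)
    {ψ : α × β → ℝ} (hψ : Measurable ψ) (hψY : Integrable (fun ω => ψ (X ω, Y ω)) μ)
    (hψe : Integrable (fun ω => ψ (X ω, e)) μ) :
    ∫ ω, ψ (X ω, erasure E e Y ω) ∂μ =
      (1 - δ) * ∫ ω, ψ (X ω, Y ω) ∂μ + δ * ∫ ω, ψ (X ω, e) ∂μ := by
  set A := E ⁻¹' {true}
  have hA : MeasurableSet[MeasurableSpace.comap E inferInstance] A :=
    ⟨{true}, measurableSet_singleton true, rfl⟩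
  have hsplit : (fun ω => ψ (X ω, erasure E e Y ω)) =
      Aᶜ.indicator (fun ω => ψ (X ω, Y ω)) + A.indicator (fun ω => ψ (X ω, e)) := by
    ext ω
    by_cases h : E ω <;> simp [erasure, A, h]
  have hrestrict : ∀ {s} {φ : α × β → ℝ}, MeasurableSet[MeasurableSpace.comap E inferInstance] s →
      Measurable φ → ∫ ω in s, φ (X ω, Y ω) ∂μ = μ.real s * ∫ ω, φ (X ω, Y ω) ∂μ :=
    fun hs hφ => ((IndepFun_iff_Indep _ _ _).mp hind.symm).setIntegral_eq_mul hE.comap_le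
      (hX.prodMk hY).aemeasurable hs hφ.aestronglyMeasurable
  rw [hsplit, integral_add' (hψY.indicator (hE.comap_le _ hA.compl))
      (hψe.indicator (hE.comap_le _ hA)),
    integral_indicator (hE.comap_le _ hA.compl), integral_indicator (hE.comap_le _ hA),
    hrestrict hA.compl hψ,
    hrestrict (φ := fun p => ψ (p.1, e)) hA (hψ.comp (measurable_fst.prodMk measurable_const)),
    probReal_compl_eq_one_sub (hE.comap_le _ hA), hδ]

theorem covariance_comp_erasure (hX : Measurable X) (hY : Measurable Y) (hE : Measurable E)
    (hYfin : (range Y).Finite) (hind : IndepFun (fun ω => (X ω, Y ω)) E μ)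
    (hδ : μ.real (E ⁻¹' {true}) = δ) {f : α → ℝ} {g : β → ℝ} (hf : Measurable f)
    (hg : Measurable g) (hfX : MemLp (fun ω => f (X ω)) 2 μ) :
    cov[fun ω => f (X ω), fun ω => g (erasure E e Y ω); μ] =
      (1 - δ) * cov[fun ω => f (X ω), fun ω => g (Y ω); μ] := by
  have hgY : MemLp (fun ω => g (Y ω)) 2 μ := memLp_comp_of_finite_range hY hYfin hg 2
  have hmul := integral_comp_erasure hX hY hE hind hδ (ψ := fun p => f p.1 * g p.2)
    ((hf.comp measurable_fst).mul (hg.comp measurable_snd)) (hfX.integrable_mul hgY)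
    ((hfX.integrable one_le_two).mul_const (g e))
  have hmean := integral_comp_erasure hX hY hE hind hδ (ψ := fun p => g p.2)
    (hg.comp measurable_snd) (hgY.integrable one_le_two) (integrable_const (g e))
  rw [covariance_eq_sub hfX (memLp_comp_of_finite_range (measurable_erasure hE hY e)
    (finite_range_erasure hYfin E e) hg 2), covariance_eq_sub hfX hgY]
  simp only [Pi.mul_apply, integral_mul_const, integral_const, probReal_univ, one_smul]
    at hmul hmean ⊢
  rw [hmul, hmean]
  ring

theorem variance_comp_erasure (hX : Measurable X) (hY : Measurable Y) (hE : Measurable E)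
    (hYfin : (range Y).Finite) (hind : IndepFun (fun ω => (X ω, Y ω)) E μ)
    (hδ : μ.real (E ⁻¹' {true}) = δ) {g : β → ℝ} (hg : Measurable g) :
    Var[fun ω => g (erasure E e Y ω); μ] =
      (1 - δ) * Var[fun ω => g (Y ω); μ] + δ * (1 - δ) * (∫ ω, g (Y ω) ∂μ - g e) ^ 2 := by
  have hgY : MemLp (fun ω => g (Y ω)) 2 μ := memLp_comp_of_finite_range hY hYfin hg 2
  have hsq := integral_comp_erasure hX hY hE hind hδ (ψ := fun p => g p.2 ^ 2)
    ((hg.comp measurable_snd).pow_const 2) hgY.integrable_sq (integrable_const (g e ^ 2))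
  have hmean := integral_comp_erasure hX hY hE hind hδ (ψ := fun p => g p.2)
    (hg.comp measurable_snd) (hgY.integrable one_le_two) (integrable_const (g e))
  rw [variance_eq_sub (memLp_comp_of_finite_range (measurable_erasure hE hY e)
    (finite_range_erasure hYfin E e) hg 2), variance_eq_sub hgY]
  simp only [Pi.pow_apply, integral_const, probReal_univ, one_smul] at hsq hmean ⊢
  rw [hsq, hmean]
  ring

theorem rho2max_erasure_le (hX : Measurable X) (hY : Measurable Y) (hE : Measurable E)
    (hYfin : (range Y).Finite) (hind : IndepFun (fun ω => (X ω, Y ω)) E μ)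
    (hδ : μ.real (E ⁻¹' {true}) = δ) :
    rho2max μ X (erasure E e Y) ≤ (1 - δ) * rho2max μ X Y := by
  have hδ1 : 0 ≤ 1 - δ := sub_nonneg.2 (hδ ▸ measureReal_le_one)
  refine rho2max_le (mul_nonneg hδ1 rho2max_nonneg) fun f g hf hg hfX _ => ?_
  have hcov := covariance_sq_le_rho2max_mul hf hg hfX (memLp_comp_of_finite_range hY hYfin hg 2)
  have hvar : (1 - δ) * Var[fun ω => g (Y ω); μ] ≤ Var[fun ω => g (erasure E e Y ω); μ] := by
    rw [variance_comp_erasure hX hY hE hYfin hind hδ hg]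
    exact le_add_of_nonneg_right
      (mul_nonneg (mul_nonneg (hδ ▸ measureReal_nonneg) hδ1) (sq_nonneg _))
  rw [covariance_comp_erasure hX hY hE hYfin hind hδ hf hg hfX]
  calc ((1 - δ) * cov[fun ω => f (X ω), fun ω => g (Y ω); μ]) ^ 2
      = (1 - δ) * ((1 - δ) * cov[fun ω => f (X ω), fun ω => g (Y ω); μ] ^ 2) := by ring
    _ ≤ (1 - δ) * ((1 - δ) * (rho2max μ X Y * Var[fun ω => f (X ω); μ] *
          Var[fun ω => g (Y ω); μ])) := by gcongr
    _ = (1 - δ) * rho2max μ X Y * Var[fun ω => f (X ω); μ] *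
          ((1 - δ) * Var[fun ω => g (Y ω); μ]) := by ring
    _ ≤ _ := by
      gcongr
      exact mul_nonneg (mul_nonneg hδ1 rho2max_nonneg) (variance_nonneg _ _)

theorem mul_rho2max_le_rho2max_erasure [MeasurableSingletonClass β] (hX : Measurable X)
    (hY : Measurable Y) (hE : Measurable E) (hYfin : (range Y).Finite) (he : ∀ ω, Y ω ≠ e)
    (hind : IndepFun (fun ω => (X ω, Y ω)) E μ) (hδ : μ.real (E ⁻¹' {true}) = δ) :
    (1 - δ) * rho2max μ X Y ≤ rho2max μ X (erasure E e Y) := by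
  rcases (hδ ▸ measureReal_le_one : δ ≤ 1).eq_or_lt with rfl | hδ1
  · simpa using rho2max_nonneg
  have h1δ : 0 < 1 - δ := sub_pos.2 hδ1
  rw [mul_comm, ← le_div_iff₀ h1δ]
  refine rho2max_le (div_nonneg rho2max_nonneg h1δ.le) fun f g hf hg hfX _ => ?_
  classical
  let g' : β → ℝ := fun y => if y = e then ∫ ω, g (Y ω) ∂μ else g y
  have hg' : Measurable g' := Measurable.ite (measurableSet_singleton e) measurable_const hg
  have hg'Y : (fun ω => g' (Y ω)) = fun ω => g (Y ω) := funext fun ω => if_neg (he ω)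
  have hcov := covariance_sq_le_rho2max_mul hf hg' hfX
    (memLp_comp_of_finite_range (measurable_erasure hE hY e) (finite_range_erasure hYfin E e) hg' 2)
  rw [covariance_comp_erasure hX hY hE hYfin hind hδ hf hg' hfX,
    variance_comp_erasure hX hY hE hYfin hind hδ hg', hg'Y] at hcov
  simp only [g', if_pos, sub_self, zero_pow two_ne_zero, mul_zero, add_zero] at hcov
  rw [div_mul_eq_mul_div, div_mul_eq_mul_div, le_div_iff₀ h1δ]
  nlinarith

theorem rho2max_erasure [MeasurableSingletonClass β] (hX : Measurable X) (hY : Measurable Y)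
    (hE : Measurable E) (hYfin : (range Y).Finite) (he : ∀ ω, Y ω ≠ e)
    (hind : IndepFun (fun ω => (X ω, Y ω)) E μ) (hδ : μ.real (E ⁻¹' {true}) = δ) :
    rho2max μ X (erasure E e Y) = (1 - δ) * rho2max μ X Y :=
  le_antisymm (rho2max_erasure_le hX hY hE hYfin hind hδ)
    (mul_rho2max_le_rho2max_erasure hX hY hE hYfin he hind hδ)

end Erasure

theorem stmt9_general {Ω : Type*} [MeasurableSpace Ω] (μ : Measure Ω) [IsProbabilityMeasure μ]
    (X Y : Ω → ℝ) (E : Ω → Bool) (δ e : ℝ)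
    (hX : Measurable X) (hY : Measurable Y) (hE : Measurable E)
    (hYfin : Set.Finite (Set.range Y))
    (he : ∀ ω, Y ω ≠ e)
    (hδ0 : 0 ≤ δ) (hδ : μ (E ⁻¹' {true}) = ENNReal.ofReal δ)
    (hind : IndepFun (fun ω => (X ω, Y ω)) E μ)
    (hv : 0 < variance Y μ) :
    rho2max μ Y (fun ω => if E ω = true then e else Y ω) = 1 - δ ∧
    rho2max μ X (fun ω => if E ω = true then e else Y ω) = (1 - δ) * rho2max μ X Y := by
  have hδ' : μ.real (E ⁻¹' {true}) = δ := by
    rw [measureReal_def, hδ, ENNReal.toReal_ofReal hδ0]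
  have hindY : IndepFun (fun ω => (Y ω, Y ω)) E μ :=
    hind.comp (measurable_snd.prodMk measurable_snd) measurable_id
  refine ⟨?_, rho2max_erasure hX hY hE hYfin he hind hδ'⟩
  calc rho2max μ Y (erasure E e Y) = (1 - δ) * rho2max μ Y Y :=
        rho2max_erasure hY hY hE hYfin he hindY hδ'
    _ = 1 - δ := by
        rw [rho2max_self (Y := Y) (memLp_comp_of_finite_range hY hYfin measurable_id 2) hv, mul_one]

/-- For the erasure channel `Z_δ` of `Y` (erasure symbol `e` outside the range of `Y`,
erasure event independent of `(X,Y)`): `ρ_m²(Y;Z_δ) = 1 - δ` and, with `X–Y–Z_δ` Markov,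
`ρ_m²(X;Z_δ) = (1-δ) ρ_m²(X;Y)`. -/
theorem stmt9 {Ω : Type*} [MeasurableSpace Ω] (μ : Measure Ω) [IsProbabilityMeasure μ]
    (X Y : Ω → ℝ) (E : Ω → Bool) (δ e : ℝ)
    (hX : Measurable X) (hY : Measurable Y) (hE : Measurable E)
    (hYfin : Set.Finite (Set.range Y)) (hXfin : Set.Finite (Set.range X))
    (he : ∀ ω, Y ω ≠ e)
    (hδ0 : 0 ≤ δ) (hδ1 : δ ≤ 1) (hδ : μ (E ⁻¹' {true}) = ENNReal.ofReal δ)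
    (hind : IndepFun (fun ω => (X ω, Y ω)) E μ)
    (hv : 0 < variance Y μ) :
    rho2max μ Y (fun ω => if E ω = true then e else Y ω) = 1 - δ ∧
    rho2max μ X (fun ω => if E ω = true then e else Y ω) = (1 - δ) * rho2max μ X Y :=
  stmt9_general μ X Y E δ e hX hY hE hYfin he hδ0 hδ hind hv
end

section
/- Let Y ~ Bernoulli(p), X take values in {±1, ±2, ..., ±k}, and suppose P_{X|Y} is a BISO channel (P_{X|Y}(x|1) = P_{X|Y}(-x|0) for all x). Then for any Z with X–Y–Z a Markov chain, mmse(Y|Z) = (mmse(X|Z) - var(X|Y=1)) / (4 E[X|Y=1]^2), provided E[X|Y=1] ≠ 0. -/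
open MeasureTheory ProbabilityTheory

/-!
Write `m = E[X | Y = 1]`. The BISO symmetry says that the law of `X` given `Y = 0` is the law
of `-X` given `Y = 1`; hence `E[X | Y] = m (2Y - 1)` and `var(X | Y = 0) = var(X | Y = 1)`, so
`mmse(X|Y) = var(X | Y = 1)`. By the Markov property
`E[X | Z] = E[E[X | Y] | Z] = m (2 E[Y | Z] - 1)`. Since `mmse(U|V) = Var U - Var E[U | V]`
(law of total variance), an affine relation `E[X | Y] = bY + a` propagated to `Z` gives
`mmse(X|Z) = mmse(X|Y) + b² mmse(Y|Z)`, with `b = 2m`.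
-/

lemma MeasurableSpace.generateFrom_singleton_compl {Ω : Type*} (s : Set Ω) :
    generateFrom {sᶜ} = generateFrom {s} := by
  refine le_antisymm (generateFrom_le ?_) (generateFrom_le ?_)
  · intro t ht
    rw [Set.mem_singleton_iff.1 ht]
    exact (measurableSet_generateFrom (Set.mem_singleton s)).compl
  · intro t ht
    rw [Set.mem_singleton_iff.1 ht]
    simpa using (measurableSet_generateFrom (Set.mem_singleton sᶜ)).compl

lemma compl_preimage_one_eq_preimage_zero {Ω : Type*} {Y : Ω → ℝ}
    (hYval : ∀ ω, Y ω = 0 ∨ Y ω = 1) : (Y ⁻¹' {1})ᶜ = Y ⁻¹' {0} := by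
  ext ω
  rcases hYval ω with h | h <;> simp [h]

lemma comap_eq_generateFrom_preimage_one {Ω : Type*} {Y : Ω → ℝ}
    (hYval : ∀ ω, Y ω = 0 ∨ Y ω = 1) :
    MeasurableSpace.comap Y inferInstance = MeasurableSpace.generateFrom {Y ⁻¹' {1}} := by
  have hY : Y = (Y ⁻¹' {1}).indicator fun _ => 1 := by
    ext ω
    rcases hYval ω with h | h <;> simp [h]
  refine le_antisymm ?_ (MeasurableSpace.generateFrom_le ?_)
  · conv_lhs => rw [hY]
    exact MeasurableSpace.comap_indicator_const_le_generateFrom_singleton _ _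
  · rintro _ rfl
    exact ⟨{1}, measurableSet_singleton 1, rfl⟩

lemma eq_sum_smul_indicator_preimage {α : Type*} {X : α → ℝ} (hXfin : (Set.range X).Finite) :
    X = ∑ x ∈ hXfin.toFinset, x • (X ⁻¹' {x}).indicator fun _ => (1 : ℝ) := by
  ext ω
  rw [Finset.sum_apply, Finset.sum_eq_single_of_mem (X ω) (by simp)]
  · simp
  · intro x _ hx
    simp [Ne.symm hx]

lemma MeasureTheory.Measure.ext_of_singleton_of_ae_mem_finite {α : Type*} [MeasurableSpace α]
    [MeasurableSingletonClass α] {ρ ρ' : Measure α} {S : Set α} (hS : S.Finite)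
    (hρ : ∀ᵐ x ∂ρ, x ∈ S) (hρ' : ∀ᵐ x ∂ρ', x ∈ S) (h : ∀ x, ρ {x} = ρ' {x}) : ρ = ρ' := by
  classical
  have hsum : ∀ ν : Measure α, (∀ᵐ x ∂ν, x ∈ S) →
      ∀ t, ν t = ∑ x ∈ hS.toFinset with x ∈ t, ν {x} := by
    intro ν hν t
    rw [sum_measure_singleton, Finset.coe_filter, ← measure_inter_conull (t := S) hν]
    congr 1
    ext x
    simp [and_comm]
  ext t -
  rw [hsum ρ hρ, hsum ρ' hρ']
  exact Finset.sum_congr rfl fun x _ => h x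

section

variable {Ω : Type*} [mΩ : MeasurableSpace Ω] {μ : Measure Ω}

lemma memLp_of_finite_range [IsFiniteMeasure μ] {X : Ω → ℝ} (hX : Measurable X)
    (hXfin : (Set.range X).Finite) (p : ENNReal) : MemLp X p μ := by
  obtain ⟨C, hC⟩ := (hXfin.image (‖·‖)).bddAbove
  exact MemLp.of_bound hX.aestronglyMeasurable C (ae_of_all _ fun ω => hC ⟨X ω, ⟨ω, rfl⟩, rfl⟩)

lemma measureReal_mul_integral_cond [IsFiniteMeasure μ] (s : Set Ω) (f : Ω → ℝ) :
    μ.real s * ∫ x, f x ∂μ[|s] = ∫ x in s, f x ∂μ := by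
  rw [ProbabilityTheory.cond, integral_smul_measure, ENNReal.toReal_inv, smul_eq_mul,
    ← measureReal_def, ← mul_assoc]
  rcases eq_or_ne (μ.real s) 0 with h | h
  · rw [Measure.restrict_eq_zero.2 ((measureReal_eq_zero_iff).1 h), integral_zero_measure, mul_zero]
  · rw [mul_inv_cancel₀ h, one_mul]

lemma integral_eq_cond_add_cond_compl [IsFiniteMeasure μ] {s : Set Ω} (hs : MeasurableSet s)
    {f : Ω → ℝ} (hf : Integrable f μ) :
    ∫ x, f x ∂μ = μ.real s * ∫ x, f x ∂μ[|s] + μ.real sᶜ * ∫ x, f x ∂μ[|sᶜ] := by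
  rw [measureReal_mul_integral_cond, measureReal_mul_integral_cond, integral_add_compl hs hf]

lemma condExp_comap_ae_eq_of_eq_zero_or_eq_one [IsFiniteMeasure μ] {Y : Ω → ℝ}
    (hY : Measurable Y) (hYval : ∀ ω, Y ω = 0 ∨ Y ω = 1) {f : Ω → ℝ} (hf : Integrable f μ) :
    μ[f | MeasurableSpace.comap Y inferInstance] =ᵐ[μ] fun ω =>
      (∫ x, f x ∂μ[|Y ⁻¹' {1}] - ∫ x, f x ∂μ[|Y ⁻¹' {0}]) * Y ω + ∫ x, f x ∂μ[|Y ⁻¹' {0}] := by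
  set s := Y ⁻¹' {1}
  have hs : MeasurableSet s := hY (measurableSet_singleton 1)
  have hcompl : sᶜ = Y ⁻¹' {0} := compl_preimage_one_eq_preimage_zero hYval
  have h1 := condExp_generateFrom_singleton hs hf
  have h0 := condExp_generateFrom_singleton hs.compl hf
  rw [MeasurableSpace.generateFrom_singleton_compl] at h0
  rw [comap_eq_generateFrom_preimage_one hYval, ← hcompl]
  have h : ∀ᵐ ω ∂μ.restrict (s ∪ sᶜ), (μ[f | MeasurableSpace.generateFrom {s}]) ω =
      (∫ x, f x ∂μ[|s] - ∫ x, f x ∂μ[|sᶜ]) * Y ω + ∫ x, f x ∂μ[|sᶜ] := by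
    rw [ae_restrict_union_iff]
    constructor
    · filter_upwards [h1, ae_restrict_mem hs] with ω h hω
      rw [h, show Y ω = 1 from hω]
      ring
    · filter_upwards [h0, ae_restrict_mem hs.compl] with ω h hω
      rw [h, show Y ω = 0 by rw [hcompl] at hω; exact hω]
      ring
  rwa [Set.union_compl_self, Measure.restrict_univ] at h

lemma identDistrib_cond_neg_cond [IsFiniteMeasure μ] {X : Ω → ℝ} (hX : Measurable X)
    (hXfin : (Set.range X).Finite) {s t : Set Ω} (hs : MeasurableSet s) (ht : MeasurableSet t)
    (hs0 : μ s ≠ 0) (ht0 : μ t ≠ 0)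
    (hsymm : ∀ x, μ (X ⁻¹' {x} ∩ s) * μ t = μ (X ⁻¹' {-x} ∩ t) * μ s) :
    IdentDistrib X (-X) μ[|s] μ[|t] := by
  refine ⟨hX.aemeasurable, hX.neg.aemeasurable, ?_⟩
  have hS : (Set.range X ∪ -Set.range X).Finite := hXfin.union hXfin.neg
  refine Measure.ext_of_singleton_of_ae_mem_finite hS ?_ ?_ fun x => ?_
  · exact (ae_map_iff hX.aemeasurable hS.measurableSet).2 (ae_of_all _ fun ω => .inl ⟨ω, rfl⟩)
  · exact (ae_map_iff hX.neg.aemeasurable hS.measurableSet).2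
      (ae_of_all _ fun ω => .inr ⟨ω, (neg_neg (X ω)).symm⟩)
  rw [Measure.map_apply hX (measurableSet_singleton x),
    Measure.map_apply (f := -X) hX.neg (measurableSet_singleton x), cond_apply hs, cond_apply ht,
    show (-X) ⁻¹' {x} = X ⁻¹' {-x} by ext; simp [neg_eq_iff_eq_neg],
    ← ENNReal.div_eq_inv_mul, ← ENNReal.div_eq_inv_mul,
    ENNReal.div_eq_div_iff ht0 (measure_ne_top μ t) hs0 (measure_ne_top μ s),
    Set.inter_comm s, Set.inter_comm t, mul_comm, hsymm, mul_comm]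

lemma variance_mul_add_const [IsProbabilityMeasure μ] {G : Ω → ℝ}
    (hG : AEStronglyMeasurable G μ) (a b : ℝ) :
    variance (fun ω => b * G ω + a) μ = b ^ 2 * variance G μ := by
  rw [variance_add_const (hG.const_mul b), variance_const_mul]

lemma condExp_mul_add_const [IsFiniteMeasure μ] {m : MeasurableSpace Ω} (hm : m ≤ mΩ)
    {G : Ω → ℝ} (hG : Integrable G μ) (a b : ℝ) :
    μ[fun ω => b * G ω + a | m] =ᵐ[μ] fun ω => b * (μ[G | m]) ω + a := by
  filter_upwards [condExp_add (m := m) (hG.smul b) (integrable_const a),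
    condExp_smul (m := m) b G] with ω hadd hsmul
  simp only [Pi.add_apply, Pi.smul_apply, smul_eq_mul, condExp_const hm] at hadd hsmul
  rw [hsmul] at hadd
  exact hadd

lemma mmse_eq_variance_sub_variance_condExp [IsProbabilityMeasure μ] {β : Type*}
    [MeasurableSpace β] {U : Ω → ℝ} {V : Ω → β} (hV : Measurable V) (hU : MemLp U 2 μ) :
    mmse μ U V = variance U μ - variance (μ[U | MeasurableSpace.comap V inferInstance]) μ := by
  rw [← integral_condVar_add_variance_condExp hV.comap_le hU, condVar, integral_condExp hV.comap_le]
  simp only [mmse, Pi.pow_apply, Pi.sub_apply, add_sub_cancel_right]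

lemma mmse_eq_mmse_add_sq_mul_mmse [IsProbabilityMeasure μ] {β : Type*} [MeasurableSpace β]
    {X Y : Ω → ℝ} {Z : Ω → β} (hX : MemLp X 2 μ) (hY : MemLp Y 2 μ) (hYm : Measurable Y)
    (hZ : Measurable Z) (a b : ℝ)
    (hXY : μ[X | MeasurableSpace.comap Y inferInstance] =ᵐ[μ] fun ω => b * Y ω + a)
    (htower : μ[X | MeasurableSpace.comap Z inferInstance] =ᵐ[μ]
      μ[μ[X | MeasurableSpace.comap Y inferInstance] | MeasurableSpace.comap Z inferInstance]) :
    mmse μ X Z = mmse μ X Y + b ^ 2 * mmse μ Y Z := by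
  have hXZ : μ[X | MeasurableSpace.comap Z inferInstance]
      =ᵐ[μ] fun ω => b * (μ[Y | MeasurableSpace.comap Z inferInstance]) ω + a :=
    htower.trans ((condExp_congr_ae hXY).trans
      (condExp_mul_add_const hZ.comap_le (hY.integrable one_le_two) a b))
  have hG : AEStronglyMeasurable (μ[Y | MeasurableSpace.comap Z inferInstance]) μ :=
    integrable_condExp.aestronglyMeasurable
  rw [mmse_eq_variance_sub_variance_condExp hZ hX, mmse_eq_variance_sub_variance_condExp hYm hX,
    mmse_eq_variance_sub_variance_condExp hZ hY, variance_congr hXZ, variance_congr hXY,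
    variance_mul_add_const hG, variance_mul_add_const hY.aestronglyMeasurable]
  ring

lemma mmse_eq_of_eq_zero_or_eq_one [IsProbabilityMeasure μ] {X Y : Ω → ℝ} (hX : MemLp X 2 μ)
    (hY : Measurable Y) (hYval : ∀ ω, Y ω = 0 ∨ Y ω = 1) :
    mmse μ X Y = μ.real (Y ⁻¹' {1}) * variance X μ[|Y ⁻¹' {1}]
      + μ.real (Y ⁻¹' {0}) * variance X μ[|Y ⁻¹' {0}] := by
  have hcond := condExp_comap_ae_eq_of_eq_zero_or_eq_one hY hYval (hX.integrable one_le_two)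
  have hint : Integrable
      (fun ω => (X ω - (μ[X | MeasurableSpace.comap Y inferInstance]) ω) ^ 2) μ :=
    (hX.sub (hX.condExp one_le_two)).integrable_sq
  rw [mmse, integral_eq_cond_add_cond_compl (hY (measurableSet_singleton 1)) hint,
    compl_preimage_one_eq_preimage_zero hYval,
    variance_eq_integral (hX.aemeasurable.mono_ac cond_absolutelyContinuous),
    variance_eq_integral (hX.aemeasurable.mono_ac cond_absolutelyContinuous)]
  congr 2 <;> refine integral_congr_ae ?_
  · filter_upwards [cond_absolutelyContinuous.ae_le hcond,
      ae_cond_mem (hY (measurableSet_singleton 1))] with ω h hω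
    rw [h, show Y ω = 1 from hω]
    ring
  · filter_upwards [cond_absolutelyContinuous.ae_le hcond,
      ae_cond_mem (hY (measurableSet_singleton 0))] with ω h hω
    rw [h, show Y ω = 0 from hω]
    ring

end

namespace ProbabilityTheory.CondIndepFun

variable {Ω : Type*} {m' : MeasurableSpace Ω} [mΩ : MeasurableSpace Ω] [StandardBorelSpace Ω]
  {hm' : m' ≤ mΩ} {μ : Measure Ω} [IsFiniteMeasure μ] {β γ : Type*} [MeasurableSpace β]
  [MeasurableSpace γ]

lemma setIntegral_preimage_condExp_indicator {X : Ω → β} {Z : Ω → γ} (hX : Measurable X)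
    (hZ : Measurable Z) (h : CondIndepFun m' hm' X Z μ) {s : Set β} {t : Set γ}
    (hs : MeasurableSet s) (ht : MeasurableSet t) :
    ∫ ω in Z ⁻¹' t, (μ⟦X ⁻¹' s | m'⟧) ω ∂μ
      = ∫ ω in Z ⁻¹' t, (X ⁻¹' s).indicator (fun _ => (1 : ℝ)) ω ∂μ := by
  have hA : MeasurableSet (X ⁻¹' s) := hX hs
  have hB : MeasurableSet (Z ⁻¹' t) := hZ ht
  have hmul : μ⟦X ⁻¹' s | m'⟧ * (Z ⁻¹' t).indicator (fun _ => 1)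
      = (Z ⁻¹' t).indicator (μ⟦X ⁻¹' s | m'⟧) := by
    ext ω
    by_cases hω : ω ∈ Z ⁻¹' t <;> simp [hω]
  have hint : Integrable (μ⟦X ⁻¹' s | m'⟧ * (Z ⁻¹' t).indicator fun _ => 1) μ := by
    rw [hmul]
    exact integrable_condExp.indicator hB
  have hpull := condExp_mul_of_stronglyMeasurable_left stronglyMeasurable_condExp hint
    ((integrable_const (1 : ℝ)).indicator hB)
  have hindep := (condIndepFun_iff_condExp_inter_preimage_eq_mul hX hZ).1 h s t hs ht
  calc ∫ ω in Z ⁻¹' t, (μ⟦X ⁻¹' s | m'⟧) ω ∂μ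
      = ∫ ω, (μ⟦X ⁻¹' s | m'⟧ * (Z ⁻¹' t).indicator (fun _ => (1 : ℝ))) ω ∂μ := by
        rw [hmul, integral_indicator hB]
    _ = ∫ ω, (μ⟦X ⁻¹' s ∩ Z ⁻¹' t | m'⟧) ω ∂μ := by
        rw [← integral_condExp hm']
        exact integral_congr_ae (hpull.trans hindep.symm)
    _ = ∫ ω in Z ⁻¹' t, (X ⁻¹' s).indicator (fun _ => (1 : ℝ)) ω ∂μ := by
        rw [integral_condExp hm', integral_indicator (hA.inter hB), setIntegral_indicator hA,
          Set.inter_comm (X ⁻¹' s)]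

/-- Conditional independence is only stated for indicators of preimages; a finite-range `X` is
a finite linear combination of those. -/
lemma setIntegral_preimage_condExp {X : Ω → ℝ} {Z : Ω → β} (hX : Measurable X)
    (hXfin : (Set.range X).Finite) (hZ : Measurable Z) (h : CondIndepFun m' hm' X Z μ)
    {t : Set β} (ht : MeasurableSet t) :
    ∫ ω in Z ⁻¹' t, (μ[X | m']) ω ∂μ = ∫ ω in Z ⁻¹' t, X ω ∂μ := by
  set f : ℝ → Ω → ℝ := fun x => x • (X ⁻¹' {x}).indicator fun _ => (1 : ℝ)
  have hf : ∀ x, Integrable (f x) μ := fun x =>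
    ((integrable_const (1 : ℝ)).indicator (hX (measurableSet_singleton x))).smul x
  have hterm : ∀ x, ∫ ω in Z ⁻¹' t, (μ[f x | m']) ω ∂μ = ∫ ω in Z ⁻¹' t, f x ω ∂μ := by
    intro x
    rw [integral_congr_ae (ae_restrict_of_ae (condExp_smul (m := m') x _))]
    simp only [f, Pi.smul_apply, integral_smul]
    rw [h.setIntegral_preimage_condExp_indicator hX hZ (measurableSet_singleton x) ht]
  obtain ⟨S, hsum⟩ : ∃ S : Finset ℝ, X = ∑ x ∈ S, f x :=
    ⟨_, eq_sum_smul_indicator_preimage hXfin⟩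
  calc ∫ ω in Z ⁻¹' t, (μ[X | m']) ω ∂μ
      = ∫ ω in Z ⁻¹' t, (∑ x ∈ S, μ[f x | m']) ω ∂μ := by
        rw [hsum]
        exact integral_congr_ae (ae_restrict_of_ae (condExp_finsetSum (fun x _ => hf x) m'))
    _ = ∑ x ∈ S, ∫ ω in Z ⁻¹' t, (μ[f x | m']) ω ∂μ := by
        simp only [Finset.sum_apply]
        exact integral_finsetSum _ fun x _ => integrable_condExp.integrableOn
    _ = ∑ x ∈ S, ∫ ω in Z ⁻¹' t, f x ω ∂μ := Finset.sum_congr rfl fun x _ => hterm x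
    _ = ∫ ω in Z ⁻¹' t, X ω ∂μ := by
        rw [hsum]
        simp only [Finset.sum_apply]
        exact (integral_finsetSum _ fun x _ => (hf x).integrableOn).symm

lemma condExp_comap_ae_eq_condExp_condExp {X : Ω → ℝ} {Z : Ω → β}
    (hX : Measurable X) (hXfin : (Set.range X).Finite) (hZ : Measurable Z)
    (h : CondIndepFun m' hm' X Z μ) :
    μ[X | MeasurableSpace.comap Z inferInstance]
      =ᵐ[μ] μ[μ[X | m'] | MeasurableSpace.comap Z inferInstance] := by
  refine (ae_eq_condExp_of_forall_setIntegral_eq hZ.comap_le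
    ((memLp_of_finite_range hX hXfin 1).integrable le_rfl)
    (fun _ _ _ => integrable_condExp.integrableOn) ?_
    stronglyMeasurable_condExp.aestronglyMeasurable).symm
  rintro _ ⟨t, ht, rfl⟩ -
  rw [MeasureTheory.setIntegral_condExp hZ.comap_le integrable_condExp ⟨t, ht, rfl⟩,
    h.setIntegral_preimage_condExp hX hXfin hZ ht]

end ProbabilityTheory.CondIndepFun

theorem stmt10_general {Ω : Type*} [MeasurableSpace Ω] [StandardBorelSpace Ω]
    (μ : Measure Ω) [IsProbabilityMeasure μ]
    (X Y : Ω → ℝ) (k : ℕ)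
    (hX : Measurable X) (hY : Measurable Y)
    (hXval : ∀ ω, ∃ i : Fin k, X ω = (i : ℝ) + 1 ∨ X ω = -((i : ℝ) + 1))
    (hYval : ∀ ω, Y ω = 0 ∨ Y ω = 1)
    (hp1 : μ (Y ⁻¹' {1}) ≠ 0) (hp0 : μ (Y ⁻¹' {0}) ≠ 0)
    (hBISO : ∀ x : ℝ, μ (X ⁻¹' {x} ∩ Y ⁻¹' {1}) * μ (Y ⁻¹' {0})
      = μ (X ⁻¹' {-x} ∩ Y ⁻¹' {0}) * μ (Y ⁻¹' {1}))
    {β : Type*} [MeasurableSpace β] (Z : Ω → β) (hZ : Measurable Z)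
    (hmarkov : CondIndepFun (MeasurableSpace.comap Y inferInstance) hY.comap_le X Z μ)
    (hEX1 : (∫ ω, X ω ∂μ[|Y ⁻¹' {1}]) ≠ 0) :
    mmse μ Y Z
      = (mmse μ X Z - variance X μ[|Y ⁻¹' {1}]) / (4 * (∫ ω, X ω ∂μ[|Y ⁻¹' {1}]) ^ 2) := by
  have hXfin : (Set.range X).Finite :=
    ((Set.finite_range fun i : Fin k => (i : ℝ) + 1).union
      (Set.finite_range fun i : Fin k => -((i : ℝ) + 1))).subset <|
      Set.range_subset_iff.2 fun ω => by
        obtain ⟨i, h | h⟩ := hXval ω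
        exacts [.inl ⟨i, h.symm⟩, .inr ⟨i, h.symm⟩]
  have hYfin : (Set.range Y).Finite :=
    (Set.toFinite {0, 1}).subset <| Set.range_subset_iff.2 fun ω => by
      rcases hYval ω with h | h <;> simp [h]
  have hlaw : IdentDistrib X (-X) μ[|Y ⁻¹' {1}] μ[|Y ⁻¹' {0}] :=
    identDistrib_cond_neg_cond hX hXfin (hY (measurableSet_singleton 1))
      (hY (measurableSet_singleton 0)) hp1 hp0 hBISO
  have hmean : ∫ ω, X ω ∂μ[|Y ⁻¹' {0}] = -∫ ω, X ω ∂μ[|Y ⁻¹' {1}] := by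
    rw [hlaw.integral_eq, Pi.neg_def, integral_neg, neg_neg]
  have hvar : variance X μ[|Y ⁻¹' {0}] = variance X μ[|Y ⁻¹' {1}] := by
    rw [hlaw.variance_eq, variance_neg]
  have hXY : mmse μ X Y = variance X μ[|Y ⁻¹' {1}] := by
    rw [mmse_eq_of_eq_zero_or_eq_one (memLp_of_finite_range hX hXfin 2) hY hYval, hvar, ← add_mul,
      ← compl_preimage_one_eq_preimage_zero hYval,
      probReal_add_probReal_compl (hY (measurableSet_singleton 1)), one_mul]
  have hXZ := mmse_eq_mmse_add_sq_mul_mmse (memLp_of_finite_range hX hXfin 2)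
    (memLp_of_finite_range hY hYfin 2) hY hZ _ _
    (condExp_comap_ae_eq_of_eq_zero_or_eq_one hY hYval
      ((memLp_of_finite_range hX hXfin 1).integrable le_rfl))
    (hmarkov.condExp_comap_ae_eq_condExp_condExp hX hXfin hZ)
  rw [hXZ, hXY, hmean]
  field_simp
  ring

/-- For a BISO channel `P_{X|Y}` with binary `Y` and any `Z` with `X–Y–Z` Markov:
`mmse(Y|Z) = (mmse(X|Z) - var(X|Y=1)) / (4 E[X|Y=1]²)`. -/
theorem stmt10 {Ω : Type*} [MeasurableSpace Ω] [StandardBorelSpace Ω] [Nonempty Ω]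
    (μ : Measure Ω) [IsProbabilityMeasure μ]
    (X Y : Ω → ℝ) (k : ℕ) (hk : 0 < k)
    (hX : Measurable X) (hY : Measurable Y)
    (hXval : ∀ ω, ∃ i : Fin k, X ω = (i : ℝ) + 1 ∨ X ω = -((i : ℝ) + 1))
    (hYval : ∀ ω, Y ω = 0 ∨ Y ω = 1)
    (hp1 : μ (Y ⁻¹' {1}) ≠ 0) (hp0 : μ (Y ⁻¹' {0}) ≠ 0)
    (hBISO : ∀ x : ℝ, μ (X ⁻¹' {x} ∩ Y ⁻¹' {1}) * μ (Y ⁻¹' {0})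
      = μ (X ⁻¹' {-x} ∩ Y ⁻¹' {0}) * μ (Y ⁻¹' {1}))
    {β : Type*} [MeasurableSpace β] (Z : Ω → β) (hZ : Measurable Z)
    (hmarkov : CondIndepFun (MeasurableSpace.comap Y inferInstance) hY.comap_le X Z μ)
    (hEX1 : (∫ ω, X ω ∂μ[|Y ⁻¹' {1}]) ≠ 0) :
    mmse μ Y Z
      = (mmse μ X Z - variance X μ[|Y ⁻¹' {1}]) / (4 * (∫ ω, X ω ∂μ[|Y ⁻¹' {1}]) ^ 2) :=
  stmt10_general μ X Y k hX hY hXval hYval hp1 hp0 hBISO Z hZ hmarkov hEX1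
end

section
/- Let Y ~ Bernoulli(p) with p ≥ 1/2 and Z a random variable jointly distributed with Y. Let P_e = min over decoders Ŷ of Pr(Ŷ(Z) ≠ Y) be the Bayes error probability. Then (1/2) P_e ≤ mmse(Y|Z) ≤ P_e. -/
/-!
Let `η = E[Y | Z]`. Since `Y - η` is orthogonal in `L²` to every function of `Z`, a `{0,1}`-valued
decision `f(Z)` has error probability `E[(Y - f)²] = mmse + E[(η - f)²] ≥ mmse`, and rounding
an arbitrary decoder to a bit does not increase its error. The Bayes decision rounds `η` to
the nearer bit, so `(η - f)² = min(η, 1 - η)² ≤ η(1 - η)`, and for binary `Y` the identity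
`E[Y²] = E[Y]` gives `mmse = E[η(1 - η)]`; hence its error is at most `2 mmse`.
-/

open MeasureTheory ProbabilityTheory

section Pythagoras

variable {Ω : Type*} {m mΩ : MeasurableSpace Ω} {μ : Measure Ω} [IsFiniteMeasure μ] {Y f : Ω → ℝ}

theorem integral_mul_condExp_eq (hm : m ≤ mΩ) {φ : Ω → ℝ} (hφ : StronglyMeasurable[m] φ)
    (hφ₂ : MemLp φ 2 μ) (hY : MemLp Y 2 μ) :
    ∫ ω, φ ω * (μ[Y|m]) ω ∂μ = ∫ ω, φ ω * Y ω ∂μ :=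
  calc ∫ ω, φ ω * (μ[Y|m]) ω ∂μ = ∫ ω, (μ[φ * Y|m]) ω ∂μ :=
        (integral_congr_ae (condExp_mul_of_stronglyMeasurable_left hφ
          (hφ₂.integrable_mul hY) (hY.integrable one_le_two))).symm
    _ = ∫ ω, φ ω * Y ω ∂μ := integral_condExp hm

theorem integral_sq_sub_eq_integral_sq_sub_condExp_add (hm : m ≤ mΩ) (hY : MemLp Y 2 μ)
    (hf : StronglyMeasurable[m] f) (hf₂ : MemLp f 2 μ) :
    ∫ ω, (Y ω - f ω) ^ 2 ∂μ
      = ∫ ω, (Y ω - (μ[Y|m]) ω) ^ 2 ∂μ + ∫ ω, ((μ[Y|m]) ω - f ω) ^ 2 ∂μ := by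
  set η := μ[Y|m]
  have hη : MemLp η 2 μ := hY.condExp one_le_two
  have hφ : MemLp (η - f) 2 μ := hη.sub hf₂
  have hYη : MemLp (Y - η) 2 μ := hY.sub hη
  have hcross : Integrable (fun ω => (η ω - f ω) * (Y ω - η ω)) μ := hφ.integrable_mul hYη
  have hsq₁ : Integrable (fun ω => (Y ω - η ω) ^ 2) μ := hYη.integrable_sq
  have hsq₂ : Integrable (fun ω => (η ω - f ω) ^ 2) μ := hφ.integrable_sq
  have horth : ∫ ω, (η ω - f ω) * (Y ω - η ω) ∂μ = 0 := by
    have hpull := integral_mul_condExp_eq hm (stronglyMeasurable_condExp.sub hf) hφ hY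
    simp only [mul_sub]
    have hφY : Integrable (fun ω => (η ω - f ω) * Y ω) μ := hφ.integrable_mul hY
    have hφη : Integrable (fun ω => (η ω - f ω) * η ω) μ := hφ.integrable_mul hη
    rw [integral_sub hφY hφη]
    exact sub_eq_zero.2 hpull.symm
  calc ∫ ω, (Y ω - f ω) ^ 2 ∂μ
      = ∫ ω, ((Y ω - η ω) ^ 2 + ((η ω - f ω) ^ 2 + 2 * ((η ω - f ω) * (Y ω - η ω)))) ∂μ := by
        congr with ω; ring
    _ = ∫ ω, (Y ω - η ω) ^ 2 ∂μ + ∫ ω, (η ω - f ω) ^ 2 ∂μ := by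
        have hrest : Integrable
            (fun ω => (η ω - f ω) ^ 2 + 2 * ((η ω - f ω) * (Y ω - η ω))) μ :=
          hsq₂.add (hcross.const_mul 2)
        rw [integral_add hsq₁ hrest,
          integral_add hsq₂ (hcross.const_mul 2), integral_const_mul, horth,
          mul_zero, add_zero]

theorem integral_sq_sub_condExp_le (hm : m ≤ mΩ) (hY : MemLp Y 2 μ)
    (hf : StronglyMeasurable[m] f) (hf₂ : MemLp f 2 μ) :
    ∫ ω, (Y ω - (μ[Y|m]) ω) ^ 2 ∂μ ≤ ∫ ω, (Y ω - f ω) ^ 2 ∂μ := by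
  rw [integral_sq_sub_eq_integral_sq_sub_condExp_add hm hY hf hf₂]
  exact le_add_of_nonneg_right (integral_nonneg fun ω => sq_nonneg _)

end Pythagoras

noncomputable def roundToBit : ℝ → ℝ := (Set.Ici (1 / 2 : ℝ)).indicator 1

theorem measurable_roundToBit : Measurable roundToBit :=
  measurable_one.indicator measurableSet_Ici

theorem roundToBit_eq_zero_or_one (x : ℝ) : roundToBit x = 0 ∨ roundToBit x = 1 :=
  Set.indicator_eq_zero_or_self _ _ x

theorem roundToBit_of_eq_zero_or_one {y : ℝ} (hy : y = 0 ∨ y = 1) : roundToBit y = y := by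
  rcases hy with rfl | rfl <;> norm_num [roundToBit]

theorem sq_sub_roundToBit_le {x : ℝ} (hx : x ∈ Set.Icc 0 1) :
    (x - roundToBit x) ^ 2 ≤ x * (1 - x) := by
  obtain ⟨hx₀, hx₁⟩ := hx
  by_cases h : 1 / 2 ≤ x
  · simp only [roundToBit, Set.indicator_of_mem (Set.mem_Ici.2 h), Pi.one_apply]; nlinarith
  · simp only [roundToBit, Set.indicator_of_notMem (mt Set.mem_Ici.1 h)]; nlinarith

theorem exists_measurable_comp_eq_roundToBit {Ω β : Type*} [MeasurableSpace β] {Z : Ω → β}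
    {h : Ω → ℝ} (hh : Measurable[MeasurableSpace.comap Z inferInstance] h) :
    ∃ g : β → ℝ, Measurable g ∧ ∀ ω, g (Z ω) = roundToBit (h ω) := by
  obtain ⟨S, hS, hSh⟩ := hh measurableSet_Ici
  refine ⟨S.indicator 1, measurable_one.indicator hS, fun ω => ?_⟩
  rw [roundToBit, ← Set.indicator_comp_right (g := (1 : ℝ → ℝ)) (f := h), ← hSh]
  rfl

section ErrorProbability

variable {Ω : Type*} [MeasurableSpace Ω] {μ : Measure Ω} {Y V : Ω → ℝ}

theorem integral_sq_sub_eq_measureReal_ne (hY : Measurable Y) (hV : Measurable V)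
    (hY01 : ∀ᵐ ω ∂μ, Y ω = 0 ∨ Y ω = 1) (hV01 : ∀ᵐ ω ∂μ, V ω = 0 ∨ V ω = 1) :
    ∫ ω, (Y ω - V ω) ^ 2 ∂μ = μ.real {ω | V ω ≠ Y ω} := by
  have hne : MeasurableSet {ω | V ω ≠ Y ω} := (measurableSet_eq_fun hV hY).compl
  rw [← integral_indicator_one hne]
  refine integral_congr_ae ?_
  filter_upwards [hY01, hV01] with ω hYω hVω
  by_cases hω : V ω = Y ω
  · simp [hω]
  · rcases hYω with h | h <;> rcases hVω with h' | h' <;> simp_all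

theorem integral_sq_sub_roundToBit_le_measureReal_ne [IsFiniteMeasure μ] (hY : Measurable Y)
    (hV : Measurable V) (hY01 : ∀ᵐ ω ∂μ, Y ω = 0 ∨ Y ω = 1) :
    ∫ ω, (Y ω - roundToBit (V ω)) ^ 2 ∂μ ≤ μ.real {ω | V ω ≠ Y ω} := by
  rw [integral_sq_sub_eq_measureReal_ne (V := fun ω => roundToBit (V ω)) hY
    (measurable_roundToBit.comp hV) hY01
    (ae_of_all _ fun ω => roundToBit_eq_zero_or_one _)]
  refine ENNReal.toReal_mono (measure_ne_top _ _) (measure_mono_ae ?_)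
  filter_upwards [hY01] with ω hYω hne hVY
  exact hne (by rw [hVY]; exact roundToBit_of_eq_zero_or_one hYω)

end ErrorProbability

section Binary

variable {Ω : Type*} {m mΩ : MeasurableSpace Ω} {μ : Measure Ω} [IsFiniteMeasure μ] {Y V : Ω → ℝ}

theorem memLp_of_ae_eq_zero_or_one (hY : AEStronglyMeasurable Y μ)
    (hY01 : ∀ᵐ ω ∂μ, Y ω = 0 ∨ Y ω = 1) (p : ENNReal) : MemLp Y p μ :=
  MemLp.of_bound hY 1 <| hY01.mono fun ω hω => by rcases hω with h | h <;> simp [h]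

theorem condExp_mem_Icc_zero_one (hm : m ≤ mΩ) (hY : Integrable Y μ)
    (hY01 : ∀ᵐ ω ∂μ, Y ω ∈ Set.Icc 0 1) : ∀ᵐ ω ∂μ, (μ[Y|m]) ω ∈ Set.Icc 0 1 := by
  have h₀ : 0 ≤ᵐ[μ] μ[Y|m] := condExp_nonneg (hY01.mono fun ω hω => hω.1)
  have h₁ : μ[Y|m] ≤ᵐ[μ] μ[fun _ => (1 : ℝ)|m] :=
    condExp_mono hY (integrable_const 1) (hY01.mono fun ω hω => hω.2)
  rw [condExp_const hm] at h₁
  filter_upwards [h₀, h₁] with ω hω₀ hω₁ using ⟨hω₀, hω₁⟩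

theorem integral_sq_sub_condExp_eq_integral_mul_one_sub (hm : m ≤ mΩ) (hY : MemLp Y 2 μ)
    (hY01 : ∀ᵐ ω ∂μ, Y ω = 0 ∨ Y ω = 1) :
    ∫ ω, (Y ω - (μ[Y|m]) ω) ^ 2 ∂μ = ∫ ω, (μ[Y|m]) ω * (1 - (μ[Y|m]) ω) ∂μ := by
  set η := μ[Y|m]
  have hη : MemLp η 2 μ := hY.condExp one_le_two
  have hpyth := integral_sq_sub_eq_integral_sq_sub_condExp_add (f := 0) hm hY
    stronglyMeasurable_zero MemLp.zero
  simp only [Pi.zero_apply, sub_zero] at hpyth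
  have hY2 : ∫ ω, Y ω ^ 2 ∂μ = ∫ ω, η ω ∂μ := by
    rw [integral_condExp hm]
    refine integral_congr_ae (hY01.mono fun ω hω => ?_)
    rcases hω with h | h <;> simp [h]
  have hη2 : Integrable (fun ω => η ω ^ 2) μ := hη.integrable_sq
  calc ∫ ω, (Y ω - η ω) ^ 2 ∂μ = ∫ ω, η ω ∂μ - ∫ ω, η ω ^ 2 ∂μ := by linarith
    _ = ∫ ω, η ω * (1 - η ω) ∂μ := by
      rw [← integral_sub (hη.integrable one_le_two) hη2]
      congr with ω; ring

theorem integral_sq_sub_condExp_le_measureReal_ne (hm : m ≤ mΩ) (hY : Measurable Y)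
    (hY01 : ∀ᵐ ω ∂μ, Y ω = 0 ∨ Y ω = 1) (hV : Measurable[m] V) :
    ∫ ω, (Y ω - (μ[Y|m]) ω) ^ 2 ∂μ ≤ μ.real {ω | V ω ≠ Y ω} := by
  have hround : Measurable[m] fun ω => roundToBit (V ω) := measurable_roundToBit.comp hV
  calc ∫ ω, (Y ω - (μ[Y|m]) ω) ^ 2 ∂μ ≤ ∫ ω, (Y ω - roundToBit (V ω)) ^ 2 ∂μ :=
        integral_sq_sub_condExp_le hm
          (memLp_of_ae_eq_zero_or_one hY.aestronglyMeasurable hY01 2) hround.stronglyMeasurable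
          (memLp_of_ae_eq_zero_or_one (hround.mono hm le_rfl).aestronglyMeasurable
            (ae_of_all _ fun ω => roundToBit_eq_zero_or_one _) 2)
    _ ≤ μ.real {ω | V ω ≠ Y ω} :=
        integral_sq_sub_roundToBit_le_measureReal_ne hY (hV.mono hm le_rfl) hY01

theorem measureReal_roundToBit_condExp_ne_le (hm : m ≤ mΩ) (hY : Measurable Y)
    (hY01 : ∀ᵐ ω ∂μ, Y ω = 0 ∨ Y ω = 1) :
    μ.real {ω | roundToBit ((μ[Y|m]) ω) ≠ Y ω} ≤ 2 * ∫ ω, (Y ω - (μ[Y|m]) ω) ^ 2 ∂μ := by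
  set η := μ[Y|m]
  have hY₂ : MemLp Y 2 μ := memLp_of_ae_eq_zero_or_one hY.aestronglyMeasurable hY01 2
  have hη : MemLp η 2 μ := hY₂.condExp one_le_two
  have hround : Measurable[m] fun ω => roundToBit (η ω) :=
    measurable_roundToBit.comp stronglyMeasurable_condExp.measurable
  have hround₂ : MemLp (fun ω => roundToBit (η ω)) 2 μ :=
    memLp_of_ae_eq_zero_or_one (hround.mono hm le_rfl).aestronglyMeasurable
      (ae_of_all _ fun ω => roundToBit_eq_zero_or_one _) 2
  have hη01 := condExp_mem_Icc_zero_one hm (hY₂.integrable one_le_two)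
    (hY01.mono fun ω hω => by rcases hω with h | h <;> simp [h])
  -- the Bayes rounding loses at most `min(η, 1 - η)² ≤ η (1 - η)` in mean square
  have hrounding : ∫ ω, (η ω - roundToBit (η ω)) ^ 2 ∂μ ≤ ∫ ω, (Y ω - η ω) ^ 2 ∂μ := by
    rw [integral_sq_sub_condExp_eq_integral_mul_one_sub hm hY₂ hY01]
    refine integral_mono_ae (hη.sub hround₂).integrable_sq ?_
      (hη01.mono fun ω hω => sq_sub_roundToBit_le hω)
    exact hη.integrable_mul ((memLp_const 1).sub hη)
  rw [← integral_sq_sub_eq_measureReal_ne hY (hround.mono hm le_rfl) hY01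
      (ae_of_all _ fun ω => roundToBit_eq_zero_or_one _),
    integral_sq_sub_eq_integral_sq_sub_condExp_add hm hY₂ hround.stronglyMeasurable hround₂]
  linarith

end Binary

theorem stmt13_general {Ω : Type*} [MeasurableSpace Ω] (μ : Measure Ω) [IsProbabilityMeasure μ]
    {β : Type*} [MeasurableSpace β] (Y : Ω → ℝ) (Z : Ω → β)
    (hY : Measurable Y) (hZ : Measurable Z)
    (hBer : ∀ ω, Y ω = 0 ∨ Y ω = 1) :
    (1 / 2) * sInf {r : ℝ | ∃ g : β → ℝ, Measurable g ∧ r = (μ {ω | g (Z ω) ≠ Y ω}).toReal}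
        ≤ mmse μ Y Z ∧
      mmse μ Y Z
        ≤ sInf {r : ℝ | ∃ g : β → ℝ, Measurable g ∧ r = (μ {ω | g (Z ω) ≠ Y ω}).toReal} := by
  have hY01 : ∀ᵐ ω ∂μ, Y ω = 0 ∨ Y ω = 1 := ae_of_all _ hBer
  have hbdd : BddBelow
      {r : ℝ | ∃ g : β → ℝ, Measurable g ∧ r = (μ {ω | g (Z ω) ≠ Y ω}).toReal} :=
    ⟨0, by rintro _ ⟨g, -, rfl⟩; exact ENNReal.toReal_nonneg⟩
  obtain ⟨g₀, hg₀, hg₀_eq⟩ := exists_measurable_comp_eq_roundToBit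
    (stronglyMeasurable_condExp (m := MeasurableSpace.comap Z inferInstance) (μ := μ)
      (f := Y)).measurable
  constructor
  · calc (1 / 2) * sInf {r : ℝ | ∃ g : β → ℝ, Measurable g ∧
          r = (μ {ω | g (Z ω) ≠ Y ω}).toReal}
        ≤ (1 / 2) *
            μ.real {ω | roundToBit ((μ[Y|MeasurableSpace.comap Z inferInstance]) ω) ≠ Y ω} := by
          gcongr
          refine csInf_le hbdd ⟨g₀, hg₀, ?_⟩
          simp only [hg₀_eq, measureReal_def]
      _ ≤ mmse μ Y Z := by
          have := measureReal_roundToBit_condExp_ne_le hZ.comap_le hY hY01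
          unfold mmse; linarith
  · refine le_csInf ⟨_, 0, measurable_const, rfl⟩ ?_
    rintro _ ⟨g, hg, rfl⟩
    exact integral_sq_sub_condExp_le_measureReal_ne hZ.comap_le hY hY01
      (hg.comp (comap_measurable Z))

/-- For binary `Y ~ Bernoulli(p)` with `p ≥ 1/2`, the Bayes error probability `P_e`
(minimum over decoders `Ŷ` of `Pr(Ŷ(Z) ≠ Y)`) satisfies `P_e/2 ≤ mmse(Y|Z) ≤ P_e`. -/
theorem stmt13 {Ω : Type*} [MeasurableSpace Ω] (μ : Measure Ω) [IsProbabilityMeasure μ]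
    {β : Type*} [MeasurableSpace β] (Y : Ω → ℝ) (Z : Ω → β)
    (hY : Measurable Y) (hZ : Measurable Z)
    (hBer : ∀ ω, Y ω = 0 ∨ Y ω = 1) (hp : (1 : ENNReal) / 2 ≤ μ (Y ⁻¹' {1})) :
    (1 / 2) * sInf {r : ℝ | ∃ g : β → ℝ, Measurable g ∧ r = (μ {ω | g (Z ω) ≠ Y ω}).toReal}
        ≤ mmse μ Y Z ∧
      mmse μ Y Z
        ≤ sInf {r : ℝ | ∃ g : β → ℝ, Measurable g ∧ r = (μ {ω | g (Z ω) ≠ Y ω}).toReal} :=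
  stmt13_general μ Y Z hY hZ hBer
end
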